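/- Let Γ be a finite simplicial graph and let x, z, u be vertices with u ≤ x, u ≠ x, z ∉ st(x), and z not dominated by x. Let D be a z-component with x ∉ D and u ∉ D. If the connected component of Γ∖st(u) containing z contains no vertex of D (note that z ∉ st(u) automatically, so this component exists), then D is a union of u-components. -/

import Mathlib

/-!
Every vertex of `D` lies outside `st(u)`: `lk(u) ⊆ st(x)`, and a vertex of `D` adjacent to `x`
would drag `x` (which lies outside `st(z)`) into `D`. An edge of `Γ∖st(u)` leaving `D` must end
in `st(z)`, hence in `lk(z)` (as `z ∉ st(u)`), and would then join `D` to the `u`-component of `z`.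
So `D` is a subset of `Γ∖st(u)` closed under its edges, i.e. a union of `u`-components.
-/

open SimpleGraph

namespace RaagPaper

/-- The star of a vertex: the vertex together with its neighbours. -/
def star {V : Type} (G : SimpleGraph V) (v : V) : Set V := insert v (G.neighborSet v)

/-- Domination: `u ≤ v` iff `lk(u) ⊆ st(v)`. -/
def Dom {V : Type} (G : SimpleGraph V) (u v : V) : Prop := G.neighborSet u ⊆ star G v

/-- Domination-equivalence of vertices. -/
def EquivDom {V : Type} (G : SimpleGraph V) (u v : V) : Prop := Dom G u v ∧ Dom G v u

/-- The domination-equivalence class of a vertex. -/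
def eqClass {V : Type} (G : SimpleGraph V) (x : V) : Set V := {v | EquivDom G v x}

/-- `C` is (the vertex set of) a connected component of the subgraph of `G` induced on `S`. -/
def IsCC {V : Type} (G : SimpleGraph V) (S : Set V) (C : Set V) : Prop :=
  ∃ v : S, C = {w : V | ∃ h : w ∈ S, (G.induce S).Reachable ⟨w, h⟩ v}

/-- `(x,y|z)` is a separating intersection of links (SIL). -/
def IsSIL {V : Type} (G : SimpleGraph V) (x y z : V) : Prop :=
  x ≠ y ∧ x ≠ z ∧ y ≠ z ∧ ¬ G.Adj x y ∧ ¬ G.Adj x z ∧ ¬ G.Adj y z ∧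
  ∀ C : Set V, IsCC G ((G.neighborSet x ∩ G.neighborSet y)ᶜ) C → z ∈ C → x ∉ C ∧ y ∉ C

/-- The graph has no SIL. -/
def HasNoSIL {V : Type} (G : SimpleGraph V) : Prop := ∀ x y z, ¬ IsSIL G x y z

/-- `D` is a (possibly empty) union of connected components of `Γ ∖ st(x)`. -/
def IsUnionCC {V : Type} (G : SimpleGraph V) (x : V) (D : Set V) : Prop :=
  ∃ 𝒞 : Set (Set V), (∀ C ∈ 𝒞, IsCC G ((star G x)ᶜ) C) ∧ D = ⋃₀ 𝒞

end RaagPaper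

namespace RaagPaper

variable {V : Type} {G : SimpleGraph V}

section Components

variable {S C : Set V}

theorem IsCC.subset (hC : IsCC G S C) : C ⊆ S := by
  obtain ⟨v, rfl⟩ := hC
  exact fun _ ⟨hw, _⟩ => hw

theorem IsCC.mem_of_adj (hC : IsCC G S C) {c w : V} (hc : c ∈ C) (hw : w ∈ S) (h : G.Adj w c) :
    w ∈ C := by
  obtain ⟨v, rfl⟩ := hC
  obtain ⟨hc, hr⟩ := hc
  exact ⟨hw, (Adj.reachable (by simpa using h :
    (G.induce S).Adj ⟨w, hw⟩ ⟨c, hc⟩)).trans hr⟩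

theorem isCC_reachableSet (v : S) :
    IsCC G S {w : V | ∃ h : w ∈ S, (G.induce S).Reachable ⟨w, h⟩ v} :=
  ⟨v, rfl⟩

theorem mem_of_reachable_of_adj_closed {P : Set V} (hP : ∀ d ∈ P, ∀ w ∈ S, G.Adj w d → w ∈ P)
    {a b : S} (hab : (G.induce S).Reachable a b) (hb : (b : V) ∈ P) : (a : V) ∈ P := by
  obtain ⟨p⟩ := hab
  induction p with
  | nil => exact hb
  | cons h _ ih => exact hP _ (ih hb) _ (Subtype.mem _) (by simpa using h)

theorem eq_sUnion_isCC_of_adj_closed {D : Set V} (hDS : D ⊆ S)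
    (hD : ∀ d ∈ D, ∀ w ∈ S, G.Adj w d → w ∈ D) :
    D = ⋃₀ {C | IsCC G S C ∧ C ⊆ D} := by
  ext a
  refine ⟨fun ha => ?_, fun ⟨C, ⟨_, hCD⟩, haC⟩ => hCD haC⟩
  refine ⟨_, ⟨isCC_reachableSet ⟨a, hDS ha⟩, ?_⟩, hDS ha, Reachable.refl _⟩
  rintro w ⟨hw, hr⟩
  exact mem_of_reachable_of_adj_closed hD hr ha

end Components

theorem mem_star_iff {v w : V} : w ∈ star G v ↔ w = v ∨ G.Adj v w :=
  Set.mem_insert_iff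

theorem mem_star_comm {v w : V} : w ∈ star G v ↔ v ∈ star G w := by
  simp only [mem_star_iff, eq_comm, G.adj_comm]

theorem notMem_star_of_dom {x z u : V} (hux : Dom G u x) (hzx : z ∉ star G x)
    (hznd : ¬ Dom G z x) : z ∉ star G u := by
  rintro (rfl | hz)
  · exact hznd hux
  · exact hzx (hux hz)

variable {x z u : V} {D : Set V}

theorem IsCC.disjoint_star_of_dom (hD : IsCC G (star G z)ᶜ D) (hux : Dom G u x)
    (hxz : x ∉ star G z) (hxD : x ∉ D) (huD : u ∉ D) : Disjoint D (star G u) := by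
  refine Set.disjoint_left.2 fun d hd hdu => ?_
  rcases mem_star_iff.1 hdu with rfl | hud
  · exact huD hd
  rcases mem_star_iff.1 (hux hud) with rfl | hxd
  · exact hxD hd
  · exact hxD (hD.mem_of_adj hd hxz hxd)

theorem IsCC.adj_closed_compl_star (hD : IsCC G (star G z)ᶜ D) (hzu : z ∉ star G u)
    (hDu : Disjoint D (star G u))
    (hcomp : ∀ E : Set V, IsCC G ((star G u)ᶜ) E → z ∈ E → E ∩ D = ∅) :
    ∀ d ∈ D, ∀ w ∈ (star G u)ᶜ, G.Adj w d → w ∈ D := by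
  intro d hd w hw hwd
  by_contra hwD
  have hwz : w ∈ star G z := by_contra fun h => hwD (hD.mem_of_adj hd h hwd)
  rcases mem_star_iff.1 hwz with rfl | hzw
  · exact hD.subset hd (mem_star_iff.2 (Or.inr hwd))
  set E : Set V := {a | ∃ h : a ∈ (star G u)ᶜ, (G.induce (star G u)ᶜ).Reachable ⟨a, h⟩ ⟨z, hzu⟩}
  have hE : IsCC G (star G u)ᶜ E := isCC_reachableSet _
  have hzE : z ∈ E := ⟨hzu, Reachable.refl _⟩
  have hwE := hE.mem_of_adj hzE hw hzw.symm
  have hdE := hE.mem_of_adj hwE (hDu.subset_compl_right hd) hwd.symm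
  exact (hcomp E hE hzE).subset ⟨hdE, hd⟩

end RaagPaper

open RaagPaper in
theorem statement13_general {V : Type} (G : SimpleGraph V) (x z u : V)
    (hux : Dom G u x) (hzst : z ∉ star G x) (hznd : ¬ Dom G z x)
    (D : Set V) (hD : IsCC G ((star G z)ᶜ) D) (hxD : x ∉ D) (huD : u ∉ D)
    (hcomp : ∀ E : Set V, IsCC G ((star G u)ᶜ) E → z ∈ E → E ∩ D = ∅) :
    IsUnionCC G u D := by
  have hDu := hD.disjoint_star_of_dom hux (mem_star_comm.not.1 hzst) hxD huD
  have hclosed := hD.adj_closed_compl_star (notMem_star_of_dom hux hzst hznd) hDu hcomp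
  exact ⟨_, fun _ hC => hC.1,
    eq_sUnion_isCC_of_adj_closed hDu.subset_compl_right hclosed⟩

open RaagPaper in
/-- Let `u ≤ x`, `u ≠ x`, `z ∉ st(x)`, `z` not dominated by `x`, and let
`D` be a `z`-component with `x ∉ D` and `u ∉ D`.  If the connected component of `Γ∖st(u)`
containing `z` contains no vertex of `D`, then `D` is a union of `u`-components. -/
theorem statement13 {V : Type} [Fintype V] (G : SimpleGraph V) (x z u : V)
    (hux : Dom G u x) (hune : u ≠ x) (hzst : z ∉ star G x) (hznd : ¬ Dom G z x)
    (D : Set V) (hD : IsCC G ((star G z)ᶜ) D) (hxD : x ∉ D) (huD : u ∉ D)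
    (hcomp : ∀ E : Set V, IsCC G ((star G u)ᶜ) E → z ∈ E → E ∩ D = ∅) :
    IsUnionCC G u D :=
  statement13_general G x z u hux hzst hznd D hD hxD huD hcomp
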